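/- Let f : ℝ² → ℝ be continuous with f(r,θ) = e^{ikθ} a(r) in polar coordinates for some integer k and continuous a : [0,∞) → ℝ with compact support. Then the integral of f over the line {x ∈ ℝ² : x₁ cos φ + x₂ sin φ = ρ} equals e^{ikφ} · 𝒜_{|k|}a(ρ) for ρ > 0, where 𝒜_k a(ρ) = 2∫_ρ^∞ a(r) T_k(ρ/r) · r/√(r² − ρ²) dr and T_k is the k-th Chebyshev polynomial of the first kind. -/

import Mathlib

/-!
On the line, the point with parameter `t` has polar coordinates
`(√(ρ² + t²), φ + arctan (t / ρ))`, so the integrand is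
`e^{ikφ} e^{ik arctan (t/ρ)} a(√(ρ² + t²))`. Pairing `t` with `-t` turns the phase into
`2 cos (k arctan (t/ρ)) = 2 T_k(ρ / √(ρ² + t²))`, and the substitution `r = √(ρ² + t²)` on
`t > 0` produces the Abel kernel `r / √(r² - ρ²)`.
-/

open MeasureTheory Set Filter Real Polynomial.Chebyshev

theorem HasCompactSupport.comp_isProperMap {X Y M : Type*} [TopologicalSpace X]
    [TopologicalSpace Y] [Zero M] {f : Y → M} {g : X → Y} (hf : HasCompactSupport f)
    (hg : IsProperMap g) : HasCompactSupport (f ∘ g) :=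
  (hg.isCompact_preimage hf).of_isClosed_subset isClosed_closure <|
    closure_minimal (preimage_mono (subset_tsupport f))
      ((isClosed_tsupport f).preimage hg.continuous)

theorem sqrt_one_add_div_sq {ρ : ℝ} (hρ : 0 < ρ) (t : ℝ) :
    √(1 + (t / ρ) ^ 2) = √(ρ ^ 2 + t ^ 2) / ρ := by
  rw [eq_div_iff hρ.ne', ← Real.sqrt_sq hρ.le, ← Real.sqrt_mul (by positivity),
    Real.sqrt_sq hρ.le]
  congr 1
  field_simp

theorem cos_arctan_div {ρ : ℝ} (hρ : 0 < ρ) (t : ℝ) :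
    cos (arctan (t / ρ)) = ρ / √(ρ ^ 2 + t ^ 2) := by
  rw [cos_arctan, sqrt_one_add_div_sq hρ, one_div_div]

theorem sin_arctan_div {ρ : ℝ} (hρ : 0 < ρ) (t : ℝ) :
    sin (arctan (t / ρ)) = t / √(ρ ^ 2 + t ^ 2) := by
  rw [sin_arctan, sqrt_one_add_div_sq hρ, div_div_div_cancel_right₀ hρ.ne']

theorem line_eq_polar {ρ : ℝ} (hρ : 0 < ρ) (φ t : ℝ) :
    (ρ * cos φ - t * sin φ, ρ * sin φ + t * cos φ) =
      (√(ρ ^ 2 + t ^ 2) * cos (φ + arctan (t / ρ)),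
        √(ρ ^ 2 + t ^ 2) * sin (φ + arctan (t / ρ))) := by
  have hs : √(ρ ^ 2 + t ^ 2) ≠ 0 := by positivity
  rw [cos_add, sin_add, cos_arctan_div hρ, sin_arctan_div hρ]
  ext <;> field_simp

theorem isProperMap_sqrt_sq_add_sq (ρ : ℝ) : IsProperMap fun t : ℝ ↦ √(ρ ^ 2 + t ^ 2) := by
  refine isProperMap_iff_tendsto_cocompact.mpr ⟨by fun_prop, ?_⟩
  refine (tendsto_atTop_mono (fun t ↦ ?_) tendsto_norm_cocompact_atTop).mono_right
    atTop_le_cocompact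
  rw [Real.norm_eq_abs, ← Real.sqrt_sq_eq_abs]
  exact Real.sqrt_le_sqrt (by nlinarith)

theorem exp_add_exp_neg_eq_chebyshevT (k : ℤ) (ψ : ℝ) :
    Complex.exp (Complex.I * k * ψ) + Complex.exp (Complex.I * k * ↑(-ψ)) =
      ((2 * (T ℝ k).eval (cos ψ) : ℝ) : ℂ) := by
  rw [T_real_cos]
  push_cast
  rw [Complex.two_cos]
  ring_nf

theorem integral_eq_integral_Ioi_add_comp_neg {E : Type*} [NormedAddCommGroup E]
    [NormedSpace ℝ E] {h : ℝ → E} (hh : Integrable h) :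
    ∫ t, h t = ∫ t in Ioi 0, (h t + h (-t)) := by
  rw [integral_add hh.integrableOn hh.comp_neg.integrableOn, integral_comp_neg_Ioi, neg_zero,
    add_comm, intervalIntegral.integral_Iic_add_Ioi hh.integrableOn hh.integrableOn]

theorem image_sqrt_sq_sub_sq_Ioi {ρ : ℝ} (hρ : 0 ≤ ρ) :
    (fun r : ℝ ↦ √(r ^ 2 - ρ ^ 2)) '' Ioi ρ = Ioi 0 := by
  ext y
  constructor
  · rintro ⟨r, hr : ρ < r, rfl⟩
    exact Real.sqrt_pos.mpr (by nlinarith)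
  · intro (hy : 0 < y)
    refine ⟨√(ρ ^ 2 + y ^ 2), ?_, ?_⟩
    · exact Real.lt_sqrt hρ |>.mpr (by nlinarith)
    · dsimp only
      rw [Real.sq_sqrt (by positivity), add_sub_cancel_left, Real.sqrt_sq hy.le]

theorem integral_Ioi_comp_sqrt_sq_add_sq {E : Type*} [NormedAddCommGroup E] [NormedSpace ℝ E]
    {ρ : ℝ} (hρ : 0 ≤ ρ) (F : ℝ → E) :
    ∫ t in Ioi 0, F √(ρ ^ 2 + t ^ 2) = ∫ r in Ioi ρ, (r / √(r ^ 2 - ρ ^ 2)) • F r := by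
  have hderiv : ∀ r ∈ Ioi ρ, HasDerivWithinAt (fun r ↦ √(r ^ 2 - ρ ^ 2))
      (r / √(r ^ 2 - ρ ^ 2)) (Ioi ρ) r := by
    intro r (hr : ρ < r)
    have hpos : r ^ 2 - ρ ^ 2 ≠ 0 := by nlinarith
    refine (((hasDerivAt_pow 2 r).sub_const (ρ ^ 2)).sqrt hpos).hasDerivWithinAt.congr_deriv ?_
    field_simp
    norm_num
  have hinj : InjOn (fun r ↦ √(r ^ 2 - ρ ^ 2)) (Ioi ρ) := by
    intro r₁ (h₁ : ρ < r₁) r₂ (h₂ : ρ < r₂) heq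
    have := (Real.sqrt_inj (by nlinarith) (by nlinarith)).mp heq
    nlinarith
  rw [← image_sqrt_sq_sub_sq_Ioi hρ,
    integral_image_eq_integral_abs_deriv_smul measurableSet_Ioi hderiv hinj]
  refine setIntegral_congr_fun measurableSet_Ioi fun r (hr : ρ < r) ↦ ?_
  have hpos : 0 ≤ r ^ 2 - ρ ^ 2 := by nlinarith
  rw [Real.sq_sqrt hpos, add_sub_cancel, Real.sqrt_sq (by linarith),
    abs_of_nonneg (div_nonneg (by linarith) (Real.sqrt_nonneg _))]

noncomputable def abelTransform (k : ℤ) (a : ℝ → ℝ) (ρ : ℝ) : ℝ :=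
  2 * ∫ r in Ioi ρ, a r * (T ℝ k).eval (ρ / r) * r / √(r ^ 2 - ρ ^ 2)

theorem abelTransform_eq_integral_Ioi (k : ℤ) (a : ℝ → ℝ) {ρ : ℝ} (hρ : 0 ≤ ρ) :
    abelTransform k a ρ =
      2 * ∫ t in Ioi 0, a √(ρ ^ 2 + t ^ 2) * (T ℝ k).eval (ρ / √(ρ ^ 2 + t ^ 2)) := by
  rw [abelTransform, integral_Ioi_comp_sqrt_sq_add_sq hρ (fun r ↦ a r * (T ℝ k).eval (ρ / r))]
  congr 1
  refine setIntegral_congr_fun measurableSet_Ioi fun r _ ↦ ?_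
  simp only [smul_eq_mul]
  ring

theorem abelTransform_abs (k : ℤ) (a : ℝ → ℝ) (ρ : ℝ) :
    abelTransform |k| a ρ = abelTransform k a ρ := by
  rw [abelTransform, abelTransform, ← Int.natCast_natAbs, T_natAbs]

theorem stmt5_general (k : ℤ) (a : ℝ → ℝ) (ha : Continuous a) (hsupp : HasCompactSupport a)
    (f : ℝ × ℝ → ℂ)
    (hpolar : ∀ r : ℝ, 0 ≤ r → ∀ θ : ℝ,
      f (r * Real.cos θ, r * Real.sin θ) = Complex.exp (Complex.I * k * θ) * a r)
    (φ ρ : ℝ) (hρ : 0 < ρ) :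
    (∫ t : ℝ, f (ρ * Real.cos φ - t * Real.sin φ, ρ * Real.sin φ + t * Real.cos φ)) =
      Complex.exp (Complex.I * k * φ) *
        ((2 * ∫ r in Set.Ioi ρ,
          a r * (Polynomial.Chebyshev.T ℝ |k|).eval (ρ / r) * r /
            Real.sqrt (r ^ 2 - ρ ^ 2) : ℝ) : ℂ) := by
  set s : ℝ → ℝ := fun t ↦ √(ρ ^ 2 + t ^ 2)
  set h : ℝ → ℂ := fun t ↦ Complex.exp (Complex.I * k * ↑(arctan (t / ρ))) * a (s t)
  have hline : ∀ t, f (ρ * cos φ - t * sin φ, ρ * sin φ + t * cos φ) =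
      Complex.exp (Complex.I * k * φ) * h t := fun t ↦ by
    rw [line_eq_polar hρ, hpolar _ (Real.sqrt_nonneg _), Complex.ofReal_add, mul_add,
      Complex.exp_add, mul_assoc]
  have hh : Integrable h :=
    (by fun_prop : Continuous h).integrable_of_hasCompactSupport
      ((hsupp.comp_isProperMap (isProperMap_sqrt_sq_add_sq ρ)).comp_left
        Complex.ofReal_zero).mul_left
  have hsymm : ∀ t, h t + h (-t) = ((2 * (a (s t) * (T ℝ k).eval (ρ / s t)) : ℝ) : ℂ) := by
    intro t
    simp only [h, s, neg_div, arctan_neg, neg_sq]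
    rw [← add_mul, exp_add_exp_neg_eq_chebyshevT, cos_arctan_div hρ]
    push_cast
    ring
  change _ = _ * (abelTransform |k| a ρ : ℂ)
  rw [abelTransform_abs, abelTransform_eq_integral_Ioi k a hρ.le]
  calc _ = ∫ t, Complex.exp (Complex.I * k * φ) * h t := integral_congr_ae (.of_forall hline)
    _ = Complex.exp (Complex.I * k * φ) * ∫ t in Ioi 0, (h t + h (-t)) := by
      rw [integral_const_mul, integral_eq_integral_Ioi_add_comp_neg hh]
    _ = _ := by
      simp only [hsymm]
      rw [integral_complex_ofReal, integral_const_mul]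

/-- for `f(r,θ) = e^{ikθ} a(r)` in polar coordinates, the integral of `f`
over the line `{x : x₁ cos φ + x₂ sin φ = ρ}` equals `e^{ikφ}·𝒜_{|k|}a(ρ)` for `ρ > 0`,
where `𝒜_k a(ρ) = 2∫_ρ^∞ a(r) T_k(ρ/r) r/√(r²−ρ²) dr` and `T_k` is the Chebyshev
polynomial of the first kind. -/
theorem stmt5 (k : ℤ) (a : ℝ → ℝ) (ha : Continuous a) (hsupp : HasCompactSupport a)
    (f : ℝ × ℝ → ℂ) (hf : Continuous f)
    (hpolar : ∀ r : ℝ, 0 ≤ r → ∀ θ : ℝ,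
      f (r * Real.cos θ, r * Real.sin θ) = Complex.exp (Complex.I * k * θ) * a r)
    (φ ρ : ℝ) (hρ : 0 < ρ) :
    (∫ t : ℝ, f (ρ * Real.cos φ - t * Real.sin φ, ρ * Real.sin φ + t * Real.cos φ)) =
      Complex.exp (Complex.I * k * φ) *
        ((2 * ∫ r in Set.Ioi ρ,
          a r * (Polynomial.Chebyshev.T ℝ |k|).eval (ρ / r) * r /
            Real.sqrt (r ^ 2 - ρ ^ 2) : ℝ) : ℂ) :=
  stmt5_general k a ha hsupp f hpolar φ ρ hρ
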